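/- arXiv:1408.5864 — 3 statements merged into one kernel-verified Lean document; each statement's English description precedes it below -/
import Mathlib

section
/- Let a finite group G act on a set X. The quotient of the set I = {(x,g) ∈ X × G : g·x = x} by the G-action h·(x,g) = (h·x, h g h⁻¹) is in canonical bijection with the disjoint union, over a set of representatives g of conjugacy classes of G, of the quotients X^g / Z_g, where X^g is the fixed-point set of g and Z_g is the centralizer of g acting on X^g. -/
/-!
Sending the class of `(x, g)` to the conjugacy class of `g` sorts the inertia quotient by
conjugacy classes. Within the class `c`, conjugating `(x, g)` by any `k` with
`k g k⁻¹ = c.out` lands in `X^{c.out}`, and two such `k` differ by an element of `Z_{c.out}`,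
so the part of the quotient over `c` is exactly `X^{c.out} / Z_{c.out}`.
-/

open Subgroup

theorem ConjClasses.mk_out {M : Type*} [Monoid M] (c : ConjClasses M) :
    ConjClasses.mk c.out = c :=
  Quotient.out_eq c

section

variable {G X : Type*} [Group G] [MulAction G X]

def InertiaRel (p q : {p : X × G // p.2 • p.1 = p.1}) : Prop :=
  ∃ h : G, (q : X × G) = (h • (p : X × G).1, h * (p : X × G).2 * h⁻¹)

def CentralizerRel (g : G) (x y : {x : X // g • x = x}) : Prop :=
  ∃ h ∈ centralizer {g}, (y : X) = h • (x : X)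

theorem smul_conj_smul_of_smul_eq {g : G} {x : X} (hx : g • x = x) (k : G) :
    (k * g * k⁻¹) • k • x = k • x := by
  rw [mul_smul, mul_smul, inv_smul_smul, hx]

theorem mul_inv_mem_centralizer_of_conj_eq {a b g r : G} (ha : a * g * a⁻¹ = r)
    (hb : b * g * b⁻¹ = r) : b * a⁻¹ ∈ centralizer {r} := by
  rw [mem_centralizer_singleton_iff]
  calc b * a⁻¹ * r = b * g * a⁻¹ := by rw [← ha]; group
    _ = r * (b * a⁻¹) := by rw [← hb]; group

theorem exists_conj_eq_out (g : G) : ∃ k : G, k * g * k⁻¹ = (ConjClasses.mk g).out :=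
  isConj_iff.mp (ConjClasses.mk_eq_mk_iff_isConj.mp (ConjClasses.mk_out _).symm)

noncomputable def conjToOut (g : G) : G :=
  (exists_conj_eq_out g).choose

theorem conjToOut_mul_mul_inv (g : G) :
    conjToOut g * g * (conjToOut g)⁻¹ = (ConjClasses.mk g).out :=
  (exists_conj_eq_out g).choose_spec

theorem conjToOut_conj_mul_mul_inv_mem_centralizer (g h : G) :
    conjToOut (h * g * h⁻¹) * h * (conjToOut g)⁻¹ ∈
      centralizer {(ConjClasses.mk (h * g * h⁻¹)).out} := by
  have hconj : ConjClasses.mk (h * g * h⁻¹) = ConjClasses.mk g :=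
    ConjClasses.mk_eq_mk_iff_isConj.mpr (isConj_iff.mpr ⟨h, rfl⟩).symm
  have hb := conjToOut_mul_mul_inv (h * g * h⁻¹)
  rw [hconj] at hb ⊢
  exact mul_inv_mem_centralizer_of_conj_eq (conjToOut_mul_mul_inv g) (by rw [← hb]; group)

theorem sigma_mk_quot_mk_eq {c d : ConjClasses G} (hcd : c = d) {x : {x : X // c.out • x = x}}
    {y : {x : X // d.out • x = x}} (hxy : ∃ k ∈ centralizer {d.out}, (y : X) = k • (x : X)) :
    (⟨c, Quot.mk _ x⟩ : (c : ConjClasses G) × Quot (CentralizerRel (X := X) c.out)) =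
      ⟨d, Quot.mk _ y⟩ := by
  subst hcd
  exact congrArg _ (Quot.sound hxy)

variable (G X)

noncomputable def inertiaToSigma :
    Quot (InertiaRel (G := G) (X := X)) →
      (c : ConjClasses G) × Quot (CentralizerRel (X := X) c.out) :=
  Quot.lift
    (fun p => ⟨ConjClasses.mk p.1.2, Quot.mk _
      ⟨conjToOut p.1.2 • p.1.1, by
        rw [← conjToOut_mul_mul_inv]; exact smul_conj_smul_of_smul_eq p.2 _⟩⟩)
    (by
      rintro ⟨⟨x, g⟩, _⟩ ⟨⟨y, g'⟩, _⟩ ⟨h, he⟩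
      obtain ⟨rfl, rfl⟩ := Prod.mk.inj he
      refine sigma_mk_quot_mk_eq
        (ConjClasses.mk_eq_mk_iff_isConj.mpr (isConj_iff.mpr ⟨h, rfl⟩))
        ⟨conjToOut (h * g * h⁻¹) * h * (conjToOut g)⁻¹, ?_, ?_⟩
      · exact conjToOut_conj_mul_mul_inv_mem_centralizer g h
      · simp only [mul_smul, inv_smul_smul])

noncomputable def sigmaToInertia :
    (c : ConjClasses G) × Quot (CentralizerRel (X := X) c.out) →
      Quot (InertiaRel (G := G) (X := X))
  | ⟨c, q⟩ => Quot.lift (fun x => Quot.mk _ ⟨(x.1, c.out), x.2⟩)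
      (by
        rintro x y ⟨k, hk, hxy⟩
        refine Quot.sound ⟨k, ?_⟩
        rw [mem_centralizer_singleton_iff] at hk
        exact Prod.ext hxy (by simp [hk])) q

noncomputable def inertiaEquivSigma :
    Quot (InertiaRel (G := G) (X := X)) ≃
      (c : ConjClasses G) × Quot (CentralizerRel (X := X) c.out) where
  toFun := inertiaToSigma G X
  invFun := sigmaToInertia G X
  left_inv := by
    rintro ⟨⟨⟨x, g⟩, _⟩⟩
    exact (Quot.sound ⟨conjToOut g, by rw [conjToOut_mul_mul_inv]⟩).symm
  right_inv := by
    rintro ⟨c, ⟨x⟩⟩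
    have ha := conjToOut_mul_mul_inv c.out
    rw [ConjClasses.mk_out] at ha
    refine sigma_mk_quot_mk_eq (ConjClasses.mk_out c)
      ⟨(conjToOut c.out)⁻¹, ?_, (inv_smul_smul _ _).symm⟩
    simpa using mul_inv_mem_centralizer_of_conj_eq ha (b := 1) (by group)

end

theorem inertia_of_global_quotient_general {G X : Type*} [Group G] [MulAction G X] :
    Nonempty (
      Quot (fun (p q : {p : X × G // p.2 • p.1 = p.1}) =>
        ∃ h : G, (q : X × G) = (h • (p : X × G).1, h * (p : X × G).2 * h⁻¹))
      ≃ (c : ConjClasses G) ×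
          Quot (fun (x y : {x : X // (Quotient.out c) • x = x}) =>
            ∃ h ∈ Subgroup.centralizer {Quotient.out c}, (y : X) = h • (x : X))) :=
  ⟨inertiaEquivSigma G X⟩

/-- The inertia set `{(x,g) : g • x = x}` modulo the `G`-action
`h • (x,g) = (h • x, h g h⁻¹)` is in bijection with the disjoint union over
conjugacy classes `c` of `G` of the quotients `X^g / Z_g`, where `g = c.out`
is a representative, `X^g` is its fixed point set and `Z_g` its centralizer. -/
theorem inertia_of_global_quotient {G X : Type*} [Group G] [Finite G] [MulAction G X] :
    Nonempty (
      Quot (fun (p q : {p : X × G // p.2 • p.1 = p.1}) =>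
        ∃ h : G, (q : X × G) = (h • (p : X × G).1, h * (p : X × G).2 * h⁻¹))
      ≃ (c : ConjClasses G) ×
          Quot (fun (x y : {x : X // (Quotient.out c) • x = x}) =>
            ∃ h ∈ Subgroup.centralizer {Quotient.out c}, (y : X) = h • (x : X))) :=
  inertia_of_global_quotient_general
end

section
/- Let μ₁,…,μ_k ∈ ℝ^n and suppose there exists ξ ∈ ℝ^n with ⟨μ_i, ξ⟩ > 0 for all i. Then for every ν ∈ ℝ^n the set {z ∈ ℂ^k : Σ_{i=1}^k μ_i |z_i|² = ν} is compact. Equivalently, the moment map Φ : ℂ^k → ℝ^n, Φ(z) = ν − ½ Σ_i μ_i |z_i|², is a proper map. -/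
/-!
Pairing `Φ(z) = ∑ |z_i|² μ_i` with `ξ` gives the positive definite quadratic form
`∑ ⟨μ_i, ξ⟩ |z_i|²`, which is proper. Since the pairing is continuous and the target is
Hausdorff, `Φ` itself is then proper; its level sets are compact, and `ν - ½ Φ` is `Φ`
followed by an affine homeomorphism.
-/

open Finset Bornology

section

variable {𝕜 ι : Type*} [RCLike 𝕜] [Fintype ι]

lemma isBounded_setOf_sum_mul_norm_sq_le {w : ι → ℝ} (hw : ∀ i, 0 < w i) (M : ℝ) :
    IsBounded {z : EuclideanSpace 𝕜 ι | ∑ i, w i * ‖z i‖ ^ 2 ≤ M} := by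
  refine (Metric.isBounded_iff_subset_closedBall 0).2 ⟨√(∑ i, M / w i), fun z hz => ?_⟩
  have hcoord : ∀ i, ‖z i‖ ^ 2 ≤ M / w i := fun i => by
    rw [le_div_iff₀' (hw i)]
    exact (single_le_sum (f := fun j => w j * ‖z j‖ ^ 2)
      (fun j _ => mul_nonneg (hw j).le (sq_nonneg _)) (mem_univ i)).trans hz
  rw [mem_closedBall_zero_iff, EuclideanSpace.norm_eq]
  exact Real.sqrt_le_sqrt (sum_le_sum fun i _ => hcoord i)

lemma isProperMap_sum_mul_norm_sq {w : ι → ℝ} (hw : ∀ i, 0 < w i) :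
    IsProperMap fun z : EuclideanSpace 𝕜 ι => ∑ i, w i * ‖z i‖ ^ 2 := by
  have hcont : Continuous fun z : EuclideanSpace 𝕜 ι => ∑ i, w i * ‖z i‖ ^ 2 := by fun_prop
  refine isProperMap_iff_isCompact_preimage.2 ⟨hcont, fun K hK => ?_⟩
  obtain ⟨M, hM⟩ := hK.bddAbove
  exact Metric.isCompact_of_isClosed_isBounded (hK.isClosed.preimage hcont)
    ((isBounded_setOf_sum_mul_norm_sq_le hw M).subset fun z hz => hM hz)

theorem isProperMap_sum_norm_sq_smul {E : Type*} [AddCommMonoid E] [Module ℝ E]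
    [TopologicalSpace E] [ContinuousAdd E] [ContinuousSMul ℝ E] [T2Space E]
    (μ : ι → E) (ℓ : E →L[ℝ] ℝ) (hℓ : ∀ i, 0 < ℓ (μ i)) :
    IsProperMap fun z : EuclideanSpace 𝕜 ι => ∑ i, ‖z i‖ ^ 2 • μ i := by
  refine isProperMap_of_comp_of_t2 (by fun_prop) ℓ.continuous ?_
  convert isProperMap_sum_mul_norm_sq (𝕜 := 𝕜) hℓ using 2 with z
  simp [map_sum, mul_comm]

end

/-- If the weights `μ₁,…,μ_k` lie in an open half-space (`⟨μ_i, ξ⟩ > 0` for some `ξ`),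
then every level set `{z : Σ μ_i |z_i|² = ν}` is compact; equivalently, the moment map
`Φ(z) = ν − ½ Σ μ_i |z_i|²` is proper. -/
theorem moment_map_proper (n k : ℕ) (μ : Fin k → Fin n → ℝ) (ξ : Fin n → ℝ)
    (hξ : ∀ i, 0 < ∑ j, μ i j * ξ j) :
    (∀ ν : Fin n → ℝ,
      IsCompact {z : EuclideanSpace ℂ (Fin k) | ∑ i, ‖z i‖ ^ 2 • μ i = ν}) ∧
    (∀ ν : Fin n → ℝ,
      IsProperMap (fun z : EuclideanSpace ℂ (Fin k) =>
        ν - (1 / 2 : ℝ) • ∑ i, ‖z i‖ ^ 2 • μ i)) := by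
  let ℓ : (Fin n → ℝ) →L[ℝ] ℝ :=
    LinearMap.toContinuousLinearMap ((dotProductBilin ℝ ℝ).flip ξ)
  have hΦ := isProperMap_sum_norm_sq_smul (𝕜 := ℂ) μ ℓ hξ
  refine ⟨fun ν => hΦ.isCompact_preimage isCompact_singleton, fun ν => ?_⟩
  have hA : IsProperMap fun y : Fin n → ℝ => ν - (1 / 2 : ℝ) • y :=
    ((Homeomorph.smulOfNeZero (1 / 2 : ℝ) (by norm_num)).trans
      (Homeomorph.subLeft ν)).isProperMap
  exact hA.comp hΦ
end

section
/- Let ℂ* act on ℂ³ with coordinates (a₀, b₀, b₁) by λ·(a₀, b₀, b₁) = (λ² a₀, λ³ b₀, λ³ b₁). Then the quotient of U = {(a₀, b₀, b₁) : b₁ ≠ 0} by this action is in bijection with the quotient of ℂ² by the group μ₃ of cube roots of unity acting by ζ·(a, b) = (ζ² a, b). -/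
/-!
Every orbit meets the slice `b₁ = 1`, because `b₁` has a cube root `r` and `r⁻¹` moves the point
into the slice. Two points of the slice lie in one orbit exactly when they differ by some `λ`
with `λ³ = 1`, which acts on the slice as `(a, b) ↦ (λ²a, λ³b) = (λ²a, b)`. Hence the inclusion
of the slice descends to a bijection from `K²/μ₃` onto the orbit space.
-/

namespace WeightedP23

variable {K : Type*} [Field K]

abbrev AffineGaugedMap (K : Type*) [Field K] := {v : K × K × K // v.2.2 ≠ 0}

def GaugeRel (v w : AffineGaugedMap K) : Prop :=
  ∃ c : Kˣ, (w : K × K × K) =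
    ((c : K) ^ 2 * (v : K × K × K).1, (c : K) ^ 3 * (v : K × K × K).2.1,
      (c : K) ^ 3 * (v : K × K × K).2.2)

def RootsOfUnityRel (a b : K × K) : Prop := ∃ ζ : K, ζ ^ 3 = 1 ∧ b = (ζ ^ 2 * a.1, a.2)

theorem gaugeRel_equivalence : Equivalence (GaugeRel (K := K)) where
  refl _ := ⟨1, by simp⟩
  symm := by
    rintro ⟨⟨a, b, b₁⟩, _⟩ ⟨_, _⟩ ⟨c, rfl⟩
    refine ⟨c⁻¹, ?_⟩
    simp only [Units.val_inv_eq_inv_val, Prod.mk.injEq]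
    refine ⟨?_, ?_, ?_⟩ <;> field_simp
  trans := by
    rintro ⟨⟨a, b, b₁⟩, _⟩ ⟨_, _⟩ ⟨_, _⟩ ⟨c, rfl⟩ ⟨d, rfl⟩
    exact ⟨d * c, by simp only [Units.val_mul, Prod.mk.injEq]; refine ⟨?_, ?_, ?_⟩ <;> ring⟩

def normalized (p : K × K) : AffineGaugedMap K := ⟨(p.1, p.2, 1), one_ne_zero⟩

theorem gaugeRel_normalized_iff {p q : K × K} :
    GaugeRel (normalized p) (normalized q) ↔ RootsOfUnityRel p q := by
  obtain ⟨a, b⟩ := p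
  obtain ⟨a', b'⟩ := q
  simp only [GaugeRel, RootsOfUnityRel, normalized, Prod.mk.injEq, mul_one]
  constructor
  · rintro ⟨c, ha, hb, hc⟩
    exact ⟨c, hc.symm, ha, by rw [hb, ← hc, one_mul]⟩
  · rintro ⟨ζ, hζ, ha, hb⟩
    have hζ0 : ζ ≠ 0 := by rintro rfl; simp at hζ
    exact ⟨Units.mk0 ζ hζ0, by simp [ha, hb, hζ]⟩

theorem exists_gaugeRel_normalized [IsAlgClosed K] (v : AffineGaugedMap K) :
    ∃ p, GaugeRel (normalized p) v := by
  obtain ⟨⟨a, b, b₁⟩, hb₁⟩ := v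
  obtain ⟨r, hr⟩ := IsAlgClosed.exists_pow_nat_eq b₁ (n := 3) (by norm_num)
  have hr0 : r ≠ 0 := by rintro rfl; simp_all
  refine ⟨(r⁻¹ ^ 2 * a, r⁻¹ ^ 3 * b), Units.mk0 r hr0, ?_⟩
  simp only [normalized, Units.val_mk0, Prod.mk.injEq, mul_one]
  refine ⟨?_, ?_, hr.symm⟩ <;> field_simp

def normalizedQuot : Quot (RootsOfUnityRel (K := K)) → Quot (GaugeRel (K := K)) :=
  Quot.map normalized fun _ _ => gaugeRel_normalized_iff.2

theorem normalizedQuot_injective : Function.Injective (normalizedQuot (K := K)) := by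
  rintro ⟨p⟩ ⟨q⟩ h
  have hrel : GaugeRel (normalized p) (normalized q) :=
    gaugeRel_equivalence.eqvGen_iff.1 (Quot.eq.1 h)
  exact Quot.sound (gaugeRel_normalized_iff.1 hrel)

theorem normalizedQuot_surjective [IsAlgClosed K] :
    Function.Surjective (normalizedQuot (K := K)) := by
  rintro ⟨v⟩
  obtain ⟨p, hp⟩ := exists_gaugeRel_normalized v
  exact ⟨Quot.mk _ p, Quot.sound hp⟩

noncomputable def normalizedQuotEquiv [IsAlgClosed K] :
    Quot (RootsOfUnityRel (K := K)) ≃ Quot (GaugeRel (K := K)) :=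
  Equiv.ofBijective normalizedQuot ⟨normalizedQuot_injective, normalizedQuot_surjective⟩

end WeightedP23

/-- For the `ℂ*`-action on `ℂ³` with weights `2,3,3`,
`λ·(a₀,b₀,b₁) = (λ²a₀, λ³b₀, λ³b₁)`, the quotient of `{b₁ ≠ 0}` is in bijection
with `ℂ²/μ₃`, where the cube roots of unity act by `ζ·(a,b) = (ζ²a, b)`. -/
theorem affine_gauged_maps_to_weighted_P23_degree_third :
    Nonempty (
      Quot (fun v w : {v : ℂ × ℂ × ℂ // v.2.2 ≠ 0} =>
        ∃ c : ℂˣ, (w : ℂ × ℂ × ℂ) =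
          ((c : ℂ) ^ 2 * (v : ℂ × ℂ × ℂ).1, (c : ℂ) ^ 3 * (v : ℂ × ℂ × ℂ).2.1,
            (c : ℂ) ^ 3 * (v : ℂ × ℂ × ℂ).2.2))
      ≃ Quot (fun a b : ℂ × ℂ =>
        ∃ ζ : ℂ, ζ ^ 3 = 1 ∧ b = (ζ ^ 2 * a.1, a.2))) :=
  ⟨WeightedP23.normalizedQuotEquiv.symm⟩
end
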